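/- arXiv:1211.3942 — 3 statements merged into one kernel-verified Lean document; each statement's English description precedes it below -/
import Mathlib

section
/- With Q₃ and Q₂^{in} as above, define the symmetric linear operators L₃ : ℝ^{3×3} → ℝ^{3×3} and L₂^{in} : ℝ^{2×2} → ℝ^{2×2} by ⟨L₃(F) : F⟩ = Q₃(F) and ⟨L₂^{in}(F'') : F''⟩ = Q₂^{in}(F'') via polarization. Let G ∈ ℝ^{3×3} and a symmetric E ∈ ℝ^{3×3} satisfy L₃(G) = E, Tr G = 0, and E₁₃ = E₂₃ = 0. Then L₂^{in}(G'') = E'' − E₃₃ · Id₂, where G'' and E'' denote the principal 2×2 minors of G and E, and Id₂ is the 2×2 identity matrix. -/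
open Matrix

/-- The 3×3 matrix `F'' + d⊗e₃ + e₃⊗d`. -/
noncomputable def emb (F : Matrix (Fin 2) (Fin 2) ℝ) (d : Fin 3 → ℝ) :
    Matrix (Fin 3) (Fin 3) ℝ :=
  Matrix.of fun i j =>
    if hi : (i : ℕ) < 2 then
      if _hj : (j : ℕ) < 2 then F ⟨i, hi⟩ ⟨j, _hj⟩ else d i
    else if hj : (j : ℕ) < 2 then d j else 2 * d 2

/-- The principal 2×2 minor of a 3×3 matrix. -/
noncomputable def pminor (A : Matrix (Fin 3) (Fin 3) ℝ) : Matrix (Fin 2) (Fin 2) ℝ :=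
  Matrix.of fun i j => A i.castSucc j.castSucc

/-- The Frobenius inner product `⟨A : B⟩ = Tr(AᵀB)` on 2×2 matrices. -/
noncomputable def minner₂ (A B : Matrix (Fin 2) (Fin 2) ℝ) : ℝ := (Aᵀ * B).trace

/-- The Frobenius inner product `⟨A : B⟩ = Tr(AᵀB)` on 3×3 matrices. -/
noncomputable def minner₃ (A B : Matrix (Fin 3) (Fin 3) ℝ) : ℝ := (Aᵀ * B).trace

lemma emb_add (F F' : Matrix (Fin 2) (Fin 2) ℝ) (d d' : Fin 3 → ℝ) :
    emb F d + emb F' d' = emb (F + F') (d + d') := by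
  ext i j
  fin_cases i <;> fin_cases j <;> simp [emb] <;> ring

lemma emb_neg (F : Matrix (Fin 2) (Fin 2) ℝ) (d : Fin 3 → ℝ) :
    -(emb F d) = emb (-F) (-d) := by
  ext i j
  fin_cases i <;> fin_cases j <;> simp [emb]

lemma emb_trace (F : Matrix (Fin 2) (Fin 2) ℝ) (d : Fin 3 → ℝ) :
    (emb F d).trace = F 0 0 + F 1 1 + 2 * d 2 := by
  simp [emb, Matrix.trace, Fin.sum_univ_three, Matrix.diag]

noncomputable def dOf (G : Matrix (Fin 3) (Fin 3) ℝ) : Fin 3 → ℝ :=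
  ![(G 0 2 + G 2 0) / 2, (G 1 2 + G 2 1) / 2, G 2 2 / 2]

lemma symOf (G : Matrix (Fin 3) (Fin 3) ℝ) :
    emb (pminor G) (dOf G) + (emb (pminor G) (dOf G))ᵀ = G + Gᵀ := by
  ext i j
  fin_cases i <;> fin_cases j <;>
    simp [emb, pminor, dOf, Matrix.transpose_apply] <;> ring

/-- **Identification of the 2d stress (Lemma 4.1).** With `Q₃` a quadratic form
(positive semidefinite, positive definite on symmetric matrices, depending only on the
symmetric part) and `Q₂ⁱⁿ(F'') = min { Q₃(F''+d⊗e₃+e₃⊗d) : Tr(F''+d⊗e₃+e₃⊗d) = 0 }`,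
let `L₃, L₂ⁱⁿ` be the symmetric operators obtained from `Q₃, Q₂ⁱⁿ` by polarization.
If `G ∈ ℝ^{3×3}` and a symmetric `E` satisfy `L₃(G) = E`, `Tr G = 0`, `E₁₃ = E₂₃ = 0`,
then `L₂ⁱⁿ(G'') = E'' − E₃₃ Id₂`; equivalently, for every `F''`,
`¼(Q₂ⁱⁿ(G''+F'') − Q₂ⁱⁿ(G''−F'')) = ⟨E'' − E₃₃ Id₂ : F''⟩`. -/
theorem stress_identification
    (Q₃ : Matrix (Fin 3) (Fin 3) ℝ → ℝ)
    (B₃ : Matrix (Fin 3) (Fin 3) ℝ →ₗ[ℝ] Matrix (Fin 3) (Fin 3) ℝ →ₗ[ℝ] ℝ)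
    (hB₃symm : ∀ F₁ F₂, B₃ F₁ F₂ = B₃ F₂ F₁)
    (hQ₃ : ∀ F, Q₃ F = B₃ F F)
    (hpsd : ∀ F, 0 ≤ Q₃ F)
    (hpd : ∀ F : Matrix (Fin 3) (Fin 3) ℝ, F.IsSymm → F ≠ 0 → 0 < Q₃ F)
    (hsym : ∀ F : Matrix (Fin 3) (Fin 3) ℝ, Q₃ F = Q₃ ((1/2 : ℝ) • (F + Fᵀ)))
    (Q₂ : Matrix (Fin 2) (Fin 2) ℝ → ℝ)
    (hQ₂ : ∀ F'' : Matrix (Fin 2) (Fin 2) ℝ,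
      IsLeast {q : ℝ | ∃ d : Fin 3 → ℝ, (emb F'' d).trace = 0 ∧ q = Q₃ (emb F'' d)}
        (Q₂ F''))
    (G E : Matrix (Fin 3) (Fin 3) ℝ)
    (hEsymm : E.IsSymm)
    (hLG : ∀ F : Matrix (Fin 3) (Fin 3) ℝ, (Q₃ (G + F) - Q₃ (G - F)) / 4 = minner₃ E F)
    (hGtr : G.trace = 0)
    (hE13 : E 0 2 = 0) (hE23 : E 1 2 = 0) :
    ∀ F'' : Matrix (Fin 2) (Fin 2) ℝ,
      (Q₂ (pminor G + F'') - Q₂ (pminor G - F'')) / 4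
        = minner₂ (pminor E - E 2 2 • (1 : Matrix (Fin 2) (Fin 2) ℝ)) F'' := by
  intro F''
  set cE : Matrix (Fin 2) (Fin 2) ℝ := pminor E - E 2 2 • (1 : Matrix (Fin 2) (Fin 2) ℝ)
    with hcE
  -- Q₃ is invariant under negation
  have hQneg : ∀ X, Q₃ (-X) = Q₃ X := by
    intro X; simp [hQ₃]
  -- bilinear expansion
  have expand : ∀ A N, Q₃ (A + N) = Q₃ A + 2 * B₃ A N + Q₃ N := by
    intro A N
    simp only [hQ₃, map_add, LinearMap.add_apply]
    rw [hB₃symm N A]; ring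
  -- L₃ G = E
  have hBG : ∀ N, B₃ G N = minner₃ E N := by
    intro N
    have h := hLG N
    have e1 := expand G N
    have e2 : Q₃ (G - N) = Q₃ G - 2 * B₃ G N + Q₃ N := by
      rw [sub_eq_add_neg, expand G (-N), map_neg, hQneg]; ring
    linarith
  -- the inner product computation
  have hc : ∀ (F : Matrix (Fin 2) (Fin 2) ℝ) (δ : Fin 3 → ℝ),
      2 * δ 2 = -(F 0 0 + F 1 1) → minner₃ E (emb F δ) = minner₂ cE F := by
    intro F δ hδ
    have h20 : E 2 0 = E 0 2 := hEsymm.apply 0 2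
    have h21 : E 2 1 = E 1 2 := hEsymm.apply 1 2
    simp [minner₃, minner₂, hcE, Matrix.trace, Matrix.mul_apply, Fin.sum_univ_three,
      Fin.sum_univ_two, emb, pminor, Matrix.one_apply, Matrix.diag]
    linear_combination δ 0 * h20 + 2 * δ 0 * hE13 + δ 1 * h21 + 2 * δ 1 * hE23 + E 2 2 * hδ
  -- symmetric parts agree
  have symG : ∀ N, Q₃ (emb (pminor G) (dOf G) + N) = Q₃ (G + N) := by
    intro N
    rw [hsym (emb (pminor G) (dOf G) + N), hsym (G + N)]
    congr 2
    rw [transpose_add, transpose_add,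
      show emb (pminor G) (dOf G) + N + ((emb (pminor G) (dOf G))ᵀ + Nᵀ)
        = (emb (pminor G) (dOf G) + (emb (pminor G) (dOf G))ᵀ) + (N + Nᵀ) from by abel,
      symOf G]
    abel
  -- trace facts
  have htr3 : G 0 0 + G 1 1 + G 2 2 = 0 := by
    simpa [Matrix.trace, Fin.sum_univ_three, Matrix.diag] using hGtr
  have trMG : (emb (pminor G) (dOf G)).trace = 0 := by
    rw [emb_trace]
    simp [pminor, dOf]
    linarith
  -- key identity
  have key : ∀ (F : Matrix (Fin 2) (Fin 2) ℝ) (δ : Fin 3 → ℝ), (emb F δ).trace = 0 →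
      Q₃ (emb (pminor G + F) (dOf G + δ))
        = Q₃ G + 2 * minner₂ cE F + Q₃ (emb F δ) := by
    intro F δ hδtr
    have hδ2 : 2 * δ 2 = -(F 0 0 + F 1 1) := by
      have h := emb_trace F δ
      rw [hδtr] at h; linarith
    rw [← emb_add, symG, expand, hBG, hc F δ hδ2]
  -- the shifted minimum
  have least : ∀ F : Matrix (Fin 2) (Fin 2) ℝ,
      IsLeast {q : ℝ | ∃ d : Fin 3 → ℝ,
          (emb (pminor G + F) d).trace = 0 ∧ q = Q₃ (emb (pminor G + F) d)}
        (Q₃ G + 2 * minner₂ cE F + Q₂ F) := by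
    intro F
    obtain ⟨⟨δ₀, hδ₀tr, hδ₀q⟩, hlb⟩ := hQ₂ F
    constructor
    · refine ⟨dOf G + δ₀, ?_, ?_⟩
      · rw [← emb_add, Matrix.trace_add, trMG, hδ₀tr]; ring
      · rw [key F δ₀ hδ₀tr, hδ₀q]
    · rintro q ⟨d, hdtr, rfl⟩
      have hd : d = dOf G + (d - dOf G) := by funext i; simp
      have hδtr : (emb F (d - dOf G)).trace = 0 := by
        have h := hdtr
        rw [hd, ← emb_add, Matrix.trace_add, trMG] at h
        linarith
      have hmem := hlb ⟨d - dOf G, hδtr, rfl⟩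
      calc Q₃ G + 2 * minner₂ cE F + Q₂ F
          ≤ Q₃ G + 2 * minner₂ cE F + Q₃ (emb F (d - dOf G)) := by linarith
        _ = Q₃ (emb (pminor G + F) (dOf G + (d - dOf G))) := (key F _ hδtr).symm
        _ = Q₃ (emb (pminor G + F) d) := by rw [← hd]
  have hval : ∀ F, Q₂ (pminor G + F) = Q₃ G + 2 * minner₂ cE F + Q₂ F :=
    fun F => (hQ₂ (pminor G + F)).unique (least F)
  -- Q₂ is even
  have hQ₂neg : ∀ F : Matrix (Fin 2) (Fin 2) ℝ, Q₂ (-F) = Q₂ F := by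
    intro F
    refine (hQ₂ (-F)).unique ?_
    obtain ⟨⟨δ₀, hδ₀tr, hδ₀q⟩, hlb⟩ := hQ₂ F
    constructor
    · exact ⟨-δ₀, by rw [← emb_neg, Matrix.trace_neg, hδ₀tr, neg_zero],
        by rw [← emb_neg, hQneg, hδ₀q]⟩
    · rintro q ⟨d, hdtr, rfl⟩
      have h1 : emb (-F) d = -(emb F (-d)) := by rw [emb_neg, neg_neg]
      have h2 : (emb F (-d)).trace = 0 := by
        rw [h1, Matrix.trace_neg] at hdtr; linarith
      have := hlb ⟨-d, h2, rfl⟩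
      rw [h1, hQneg]
      exact this
  have hmneg : minner₂ cE (-F'') = - minner₂ cE F'' := by simp [minner₂]
  have h1 := hval F''
  have h2 := hval (-F'')
  rw [show pminor G - F'' = pminor G + (-F'') from sub_eq_add_neg _ _, h1, h2,
    hQ₂neg F'', hmneg]
  ring
end

section
/- With the notation of the previous statement (Q₃ positive definite on symmetric matrices, Q₂^{in} the constrained minimum, d(F'') the unique minimizer), suppose G ∈ ℝ^{3×3} is symmetric with Tr G = 0, E = L₃(G) satisfies E₁₃ = E₂₃ = 0, and suppose Q₂^{in}(G'') = Q₃(G). Then the minimizer satisfies d(G'') = (G₁₃, G₂₃, G₃₃/2), i.e., the tangential part of the minimizer equals the off-plane entries (G₁₃, G₂₃) of G. -/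
open Matrix

/-!
Since `G` is symmetric, `G = emb G'' d₀` with `d₀ = (G₁₃, G₂₃, G₃₃/2)`, so `d₀` is an admissible
competitor attaining the same value `Q₃(G)` as the minimizer `d`. By the parallelogram law, `Q₃`
at the admissible midpoint of `d` and `d₀` is that common value minus `Q₃(emb G'' d - G)/4`.
Minimality forces this defect to vanish, and positive definiteness on symmetric matrices gives
`emb G'' d = G`, whence `d = d₀`.
-/

section Bilinear

variable {M : Type*} [AddCommGroup M] [Module ℝ M]

theorem LinearMap.apply_midpoint_add_apply_sub (B : M →ₗ[ℝ] M →ₗ[ℝ] ℝ)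
    (hB : ∀ x y, B x y = B y x) (x y : M) :
    B ((1 / 2 : ℝ) • (x + y)) ((1 / 2 : ℝ) • (x + y)) + B (x - y) (x - y) / 4 =
      (B x x + B y y) / 2 := by
  simp only [map_add, map_sub, map_smul, LinearMap.add_apply, LinearMap.sub_apply,
    LinearMap.smul_apply, smul_eq_mul]
  rw [hB y x]
  ring

end Bilinear

section Embedding

variable (F : Matrix (Fin 2) (Fin 2) ℝ)

theorem emb_injective : Function.Injective (emb F) := by
  intro d d' h
  funext i
  have hi := congrFun (congrFun h i) 2
  fin_cases i <;> simpa [emb] using hi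

theorem emb_smul_add_smul (d d' : Fin 3 → ℝ) {a b : ℝ} (hab : a + b = 1) :
    emb F (a • d + b • d') = a • emb F d + b • emb F d' := by
  obtain rfl : a = 1 - b := by linarith
  ext i j
  fin_cases i <;> fin_cases j <;> simp [emb] <;> ring

theorem emb_isSymm {F : Matrix (Fin 2) (Fin 2) ℝ} (hF : F.IsSymm) (d : Fin 3 → ℝ) :
    (emb F d).IsSymm := by
  have hFij : ∀ i j, F j i = F i j := fun i j => by simpa using congrFun (congrFun hF i) j
  ext i j
  fin_cases i <;> fin_cases j <;> simp [emb, hFij]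

theorem pminor_isSymm {G : Matrix (Fin 3) (Fin 3) ℝ} (hG : G.IsSymm) : (pminor G).IsSymm := by
  ext i j
  simpa [pminor] using congrFun (congrFun hG i.castSucc) j.castSucc

theorem emb_pminor_of_isSymm {G : Matrix (Fin 3) (Fin 3) ℝ} (hG : G.IsSymm) :
    emb (pminor G) ![G 0 2, G 1 2, G 2 2 / 2] = G := by
  have hGij : ∀ i j, G j i = G i j := fun i j => by simpa using congrFun (congrFun hG i) j
  ext i j
  fin_cases i <;> fin_cases j <;> simp [emb, pminor, hGij, mul_div_cancel₀]

end Embedding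

theorem minimizer_identification_general
    (Q₃ : Matrix (Fin 3) (Fin 3) ℝ → ℝ)
    (B₃ : Matrix (Fin 3) (Fin 3) ℝ →ₗ[ℝ] Matrix (Fin 3) (Fin 3) ℝ →ₗ[ℝ] ℝ)
    (hB₃symm : ∀ F₁ F₂, B₃ F₁ F₂ = B₃ F₂ F₁)
    (hQ₃ : ∀ F, Q₃ F = B₃ F F)
    (hpd : ∀ F : Matrix (Fin 3) (Fin 3) ℝ, F.IsSymm → F ≠ 0 → 0 < Q₃ F)
    (G : Matrix (Fin 3) (Fin 3) ℝ)
    (hGsymm : G.IsSymm) (hGtr : G.trace = 0)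
    (d : Fin 3 → ℝ)
    (hconstr : (emb (pminor G) d).trace = 0)
    (hmin : ∀ d' : Fin 3 → ℝ, (emb (pminor G) d').trace = 0 →
      Q₃ (emb (pminor G) d) ≤ Q₃ (emb (pminor G) d'))
    (hval : Q₃ (emb (pminor G) d) = Q₃ G) :
    d = ![G 0 2, G 1 2, G 2 2 / 2] := by
  set d₀ : Fin 3 → ℝ := ![G 0 2, G 1 2, G 2 2 / 2]
  have hG : emb (pminor G) d₀ = G := emb_pminor_of_isSymm hGsymm
  have hmid : emb (pminor G) ((1 / 2 : ℝ) • d + (1 / 2 : ℝ) • d₀) =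
      (1 / 2 : ℝ) • (emb (pminor G) d + G) := by
    rw [emb_smul_add_smul _ _ _ (by norm_num), hG, smul_add]
  have hmid_le := hmin _ <| by
    rw [hmid, trace_smul, trace_add, hconstr, hGtr, add_zero, smul_zero]
  apply emb_injective (pminor G)
  rw [hG, ← sub_eq_zero]
  by_contra hne
  have hpos := hpd _ ((emb_isSymm (pminor_isSymm hGsymm) d).sub hGsymm) hne
  have hpar := B₃.apply_midpoint_add_apply_sub hB₃symm (emb (pminor G) d) G
  rw [hmid, hQ₃, hQ₃] at hmid_le
  rw [hQ₃, hQ₃] at hval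
  rw [hQ₃] at hpos
  linarith

/-- **Identification of the minimizer (formula (4.4)).** Let `Q₃` be a quadratic form,
positive semidefinite, positive definite on symmetric matrices, depending only on the
symmetric part. Let `G` be symmetric with `Tr G = 0`, let `E = L₃(G)` satisfy
`E₁₃ = E₂₃ = 0`, and suppose `Q₂ⁱⁿ(G'') = Q₃(G)`, i.e. the constrained minimum for `G''`
is attained with value `Q₃(G)` at the minimizer `d`. Then `d = (G₁₃, G₂₃, G₃₃/2)`. -/
theorem minimizer_identification
    (Q₃ : Matrix (Fin 3) (Fin 3) ℝ → ℝ)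
    (B₃ : Matrix (Fin 3) (Fin 3) ℝ →ₗ[ℝ] Matrix (Fin 3) (Fin 3) ℝ →ₗ[ℝ] ℝ)
    (hB₃symm : ∀ F₁ F₂, B₃ F₁ F₂ = B₃ F₂ F₁)
    (hQ₃ : ∀ F, Q₃ F = B₃ F F)
    (hpsd : ∀ F, 0 ≤ Q₃ F)
    (hpd : ∀ F : Matrix (Fin 3) (Fin 3) ℝ, F.IsSymm → F ≠ 0 → 0 < Q₃ F)
    (hsym : ∀ F : Matrix (Fin 3) (Fin 3) ℝ, Q₃ F = Q₃ ((1/2 : ℝ) • (F + Fᵀ)))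
    (G E : Matrix (Fin 3) (Fin 3) ℝ)
    (hGsymm : G.IsSymm) (hGtr : G.trace = 0)
    (hLG : ∀ F : Matrix (Fin 3) (Fin 3) ℝ, (Q₃ (G + F) - Q₃ (G - F)) / 4 = minner₃ E F)
    (hE13 : E 0 2 = 0) (hE23 : E 1 2 = 0)
    (d : Fin 3 → ℝ)
    (hconstr : (emb (pminor G) d).trace = 0)
    (hmin : ∀ d' : Fin 3 → ℝ, (emb (pminor G) d').trace = 0 →
      Q₃ (emb (pminor G) d) ≤ Q₃ (emb (pminor G) d'))
    (hval : Q₃ (emb (pminor G) d) = Q₃ G) :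
    d = ![G 0 2, G 1 2, G 2 2 / 2] :=
  minimizer_identification_general Q₃ B₃ hB₃symm hQ₃ hpd G hGsymm hGtr d hconstr hmin hval
end

section
/- Let Q₃ : ℝ^{3×3} → ℝ be a quadratic form that is positive definite on symmetric matrices and depends only on the symmetric part. Then the induced form Q₂^{in}(F'') = min_{d ∈ ℝ³} { Q₃(F'' + d⊗e₃ + e₃⊗d) : Tr(F'' + d⊗e₃ + e₃⊗d) = 0 } is a quadratic form on ℝ^{2×2} that is positive semidefinite, positive definite on symmetric 2×2 matrices, and depends only on sym F''. -/
open Matrix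

namespace IndAux

def M0 : Matrix (Fin 3) (Fin 3) ℝ := !![0,0,1;0,0,0;1,0,0]
def M1 : Matrix (Fin 3) (Fin 3) ℝ := !![0,0,0;0,0,1;0,1,0]
def M2 : Matrix (Fin 3) (Fin 3) ℝ := !![0,0,0;0,0,0;0,0,2]

noncomputable def Afun (F : Matrix (Fin 2) (Fin 2) ℝ) : Matrix (Fin 3) (Fin 3) ℝ :=
  Matrix.of fun i j =>
    if hi : (i : ℕ) < 2 then
      if hj : (j : ℕ) < 2 then F ⟨i, hi⟩ ⟨j, hj⟩ else 0
    else if (j : ℕ) < 2 then 0 else -F.trace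

lemma Afun_apply (F : Matrix (Fin 2) (Fin 2) ℝ) (i j : Fin 3) :
    Afun F i j =
      (if hi : (i : ℕ) < 2 then
        if hj : (j : ℕ) < 2 then F ⟨i, hi⟩ ⟨j, hj⟩ else 0
      else if (j : ℕ) < 2 then 0 else -F.trace) := rfl

lemma emb_apply (F : Matrix (Fin 2) (Fin 2) ℝ) (d : Fin 3 → ℝ) (i j : Fin 3) :
    emb F d i j =
      (if hi : (i : ℕ) < 2 then
        if hj : (j : ℕ) < 2 then F ⟨i, hi⟩ ⟨j, hj⟩ else d i
      else if (j : ℕ) < 2 then d j else 2 * d 2) := rfl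

noncomputable def A : Matrix (Fin 2) (Fin 2) ℝ →ₗ[ℝ] Matrix (Fin 3) (Fin 3) ℝ where
  toFun := Afun
  map_add' F G := by
    ext i j
    simp only [Matrix.add_apply, Afun_apply, Matrix.trace_add]
    split_ifs <;> simp [Matrix.add_apply] <;> ring
  map_smul' r F := by
    ext i j
    simp only [Matrix.smul_apply, Afun_apply, Matrix.trace_smul, RingHom.id_apply,
      smul_eq_mul]
    split_ifs <;> simp [Matrix.smul_apply] <;> ring

lemma A_apply (F : Matrix (Fin 2) (Fin 2) ℝ) : A F = Afun F := rfl

lemma emb_eq (F : Matrix (Fin 2) (Fin 2) ℝ) (d : Fin 3 → ℝ) :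
    emb F d = A F + d 0 • M0 + d 1 • M1 + (d 2 + F.trace / 2) • M2 := by
  ext i j
  simp only [Matrix.add_apply, Matrix.smul_apply, A_apply, Afun_apply, emb_apply,
    smul_eq_mul]
  fin_cases i <;> fin_cases j <;>
    simp [M0, M1, M2, Matrix.trace_fin_two, Matrix.vecHead, Matrix.vecTail] <;> ring

lemma trace_emb (F : Matrix (Fin 2) (Fin 2) ℝ) (d : Fin 3 → ℝ) :
    (emb F d).trace = F.trace + 2 * d 2 := by
  simp only [Matrix.trace_fin_three, Matrix.trace_fin_two, emb_apply]
  norm_num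

lemma M0_isSymm : M0.IsSymm := by
  ext i j; fin_cases i <;> fin_cases j <;> simp [M0, Matrix.IsSymm, Matrix.vecHead, Matrix.vecTail]

lemma M1_isSymm : M1.IsSymm := by
  ext i j; fin_cases i <;> fin_cases j <;> simp [M1, Matrix.IsSymm, Matrix.vecHead, Matrix.vecTail]

lemma A_transpose (F : Matrix (Fin 2) (Fin 2) ℝ) : (A F)ᵀ = A Fᵀ := by
  ext i j
  simp only [Matrix.transpose_apply, A_apply, Afun_apply, Matrix.trace_transpose]
  fin_cases i <;> fin_cases j <;> simp

lemma A_block (F : Matrix (Fin 2) (Fin 2) ℝ) (i j : Fin 2) :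
    (A F) (Fin.castLE (by norm_num) i) (Fin.castLE (by norm_num) j) = F i j := by
  simp only [A_apply, Afun_apply]
  fin_cases i <;> fin_cases j <;> simp

lemma M0_block (i j : Fin 2) :
    M0 (Fin.castLE (by norm_num) i) (Fin.castLE (by norm_num) j) = 0 := by
  fin_cases i <;> fin_cases j <;> rfl

lemma M1_block (i j : Fin 2) :
    M1 (Fin.castLE (by norm_num) i) (Fin.castLE (by norm_num) j) = 0 := by
  fin_cases i <;> fin_cases j <;> rfl

lemma M0_ne_zero : (M0 : Matrix (Fin 3) (Fin 3) ℝ) ≠ 0 := by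
  intro h
  have := congrFun (congrFun h 0) 2
  simp [M0] at this

lemma M1_ne_zero : (M1 : Matrix (Fin 3) (Fin 3) ℝ) ≠ 0 := by
  intro h
  have := congrFun (congrFun h 1) 2
  simp [M1] at this

end IndAux

open IndAux

/-- **Properties of the induced form `Q₂ⁱⁿ` (formula (1.5)).** Let `Q₃` be a quadratic
form on `ℝ^{3×3}`, positive definite on symmetric matrices, positive semidefinite, and
depending only on the symmetric part. Then
`Q₂ⁱⁿ(F'') = min { Q₃(F''+d⊗e₃+e₃⊗d) : Tr(F''+d⊗e₃+e₃⊗d) = 0 }` is a quadratic form on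
`ℝ^{2×2}`, positive semidefinite, positive definite on symmetric matrices, and depending
only on `sym F''`. -/
theorem induced_form_properties
    (Q₃ : Matrix (Fin 3) (Fin 3) ℝ → ℝ)
    (B₃ : Matrix (Fin 3) (Fin 3) ℝ →ₗ[ℝ] Matrix (Fin 3) (Fin 3) ℝ →ₗ[ℝ] ℝ)
    (hB₃symm : ∀ F₁ F₂, B₃ F₁ F₂ = B₃ F₂ F₁)
    (hQ₃ : ∀ F, Q₃ F = B₃ F F)
    (hpsd : ∀ F, 0 ≤ Q₃ F)
    (hpd : ∀ F : Matrix (Fin 3) (Fin 3) ℝ, F.IsSymm → F ≠ 0 → 0 < Q₃ F)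
    (hsym : ∀ F : Matrix (Fin 3) (Fin 3) ℝ, Q₃ F = Q₃ ((1/2 : ℝ) • (F + Fᵀ)))
    (Q₂ : Matrix (Fin 2) (Fin 2) ℝ → ℝ)
    (hQ₂ : ∀ F'' : Matrix (Fin 2) (Fin 2) ℝ,
      IsLeast {q : ℝ | ∃ d : Fin 3 → ℝ, (emb F'' d).trace = 0 ∧ q = Q₃ (emb F'' d)}
        (Q₂ F'')) :
    (∃ B₂ : Matrix (Fin 2) (Fin 2) ℝ →ₗ[ℝ] Matrix (Fin 2) (Fin 2) ℝ →ₗ[ℝ] ℝ,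
      (∀ F₁ F₂, B₂ F₁ F₂ = B₂ F₂ F₁) ∧ ∀ F'', Q₂ F'' = B₂ F'' F'') ∧
    (∀ F'', 0 ≤ Q₂ F'') ∧
    (∀ F'' : Matrix (Fin 2) (Fin 2) ℝ, F''.IsSymm → F'' ≠ 0 → 0 < Q₂ F'') ∧
    (∀ F'' : Matrix (Fin 2) (Fin 2) ℝ, Q₂ F'' = Q₂ ((1/2 : ℝ) • (F'' + F''ᵀ))) := by
  classical
  -- Gram data of the e₃-direction matrices
  set a : ℝ := B₃ M0 M0 with ha
  set b : ℝ := B₃ M0 M1 with hb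
  set c : ℝ := B₃ M1 M1 with hc
  have ha_pos : 0 < a := by
    rw [ha, ← hQ₃]
    exact hpd M0 M0_isSymm M0_ne_zero
  have hdet : 0 < a * c - b * b := by
    have hw : (a • M1 - b • M0) ≠ 0 := by
      intro h
      have := congrFun (congrFun h 2) 1
      simp [M0, M1, Matrix.vecHead, Matrix.vecTail] at this
      exact absurd this (ne_of_gt ha_pos)
    have hwsymm : (a • M1 - b • M0).IsSymm := by
      unfold Matrix.IsSymm
      rw [Matrix.transpose_sub, Matrix.transpose_smul, Matrix.transpose_smul,
        M0_isSymm.eq, M1_isSymm.eq]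
    have hQw := hpd _ hwsymm hw
    rw [hQ₃] at hQw
    have hexp : B₃ (a • M1 - b • M0) (a • M1 - b • M0) = a * (a * c - b * b) := by
      simp only [map_sub, _root_.map_smul, LinearMap.sub_apply, LinearMap.smul_apply,
        smul_eq_mul, LinearMap.map_smul₂, LinearMap.map_sub₂]
      rw [hB₃symm M1 M0, ← ha, ← hb, ← hc]
      ring
    rw [hexp] at hQw
    by_contra hcon
    push_neg at hcon
    nlinarith
  have hdet_ne : a * c - b * b ≠ 0 := ne_of_gt hdet
  set det : ℝ := a * c - b * b with hdetdef
  -- the optimal coefficients, as linear functionals of F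
  set xL : Matrix (Fin 2) (Fin 2) ℝ →ₗ[ℝ] ℝ :=
    (b / det) • ((B₃.flip M1).comp A) - (c / det) • ((B₃.flip M0).comp A) with hxL
  set yL : Matrix (Fin 2) (Fin 2) ℝ →ₗ[ℝ] ℝ :=
    (b / det) • ((B₃.flip M0).comp A) - (a / det) • ((B₃.flip M1).comp A) with hyL
  -- the linear minimizer map
  set T : Matrix (Fin 2) (Fin 2) ℝ →ₗ[ℝ] Matrix (Fin 3) (Fin 3) ℝ :=
    A + xL.smulRight M0 + yL.smulRight M1 with hT
  have hTapp : ∀ F, T F = A F + xL F • M0 + yL F • M1 := by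
    intro F; simp [hT]
  -- orthogonality of T F against M0, M1
  have horth0 : ∀ F, B₃ (T F) M0 = 0 := by
    intro F
    rw [hTapp]
    simp only [map_add, _root_.map_smul, LinearMap.add_apply, LinearMap.smul_apply, smul_eq_mul,
      hxL, hyL, LinearMap.sub_apply, LinearMap.smul_apply, LinearMap.comp_apply,
      LinearMap.flip_apply, smul_eq_mul]
    rw [hB₃symm M1 M0]
    field_simp
    ring
  have horth1 : ∀ F, B₃ (T F) M1 = 0 := by
    intro F
    rw [hTapp]
    simp only [map_add, _root_.map_smul, LinearMap.add_apply, LinearMap.smul_apply, smul_eq_mul,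
      hxL, hyL, LinearMap.sub_apply, LinearMap.smul_apply, LinearMap.comp_apply,
      LinearMap.flip_apply, smul_eq_mul]
    field_simp
    ring
  -- Q₃ (T F + u•M0 + v•M1) ≥ Q₃ (T F)
  have hmin : ∀ F (u v : ℝ), Q₃ (T F) ≤ Q₃ (T F + u • M0 + v • M1) := by
    intro F u v
    set P : Matrix (Fin 3) (Fin 3) ℝ := u • M0 + v • M1 with hP
    have h1 : B₃ (T F) P = 0 := by
      rw [hP]
      simp only [map_add, _root_.map_smul, smul_eq_mul, horth0, horth1]; ring
    have h2 : B₃ P (T F) = 0 := by rw [hB₃symm]; exact h1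
    have hexp : Q₃ (T F + P) = Q₃ (T F) + Q₃ P := by
      rw [hQ₃, hQ₃, hQ₃]
      simp only [map_add, LinearMap.add_apply, h1, h2]
      ring
    have hrw : T F + u • M0 + v • M1 = T F + P := by rw [hP]; abel
    rw [hrw, hexp]
    linarith [hpsd P]
  -- emb F d under the trace constraint
  have hemb : ∀ F (d : Fin 3 → ℝ), (emb F d).trace = 0 →
      emb F d = A F + d 0 • M0 + d 1 • M1 := by
    intro F d htr
    rw [trace_emb] at htr
    have hd2 : d 2 + F.trace / 2 = 0 := by linarith
    rw [emb_eq, hd2, zero_smul, add_zero]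
  -- T F is attained: Q₂ F = Q₃ (T F)
  have hQT : ∀ F, Q₂ F = Q₃ (T F) := by
    intro F
    set d : Fin 3 → ℝ := fun i => if i = 0 then xL F else if i = 1 then yL F
      else -F.trace / 2 with hd
    have htr : (emb F d).trace = 0 := by
      rw [trace_emb]
      simp [hd]
      ring
    have hembT : emb F d = T F := by
      rw [hemb F d htr, hTapp]
      simp [hd]
    have hmem : Q₃ (T F) ∈ {q : ℝ | ∃ d : Fin 3 → ℝ,
        (emb F d).trace = 0 ∧ q = Q₃ (emb F d)} := ⟨d, htr, by rw [hembT]⟩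
    have hle : Q₂ F ≤ Q₃ (T F) := (hQ₂ F).2 hmem
    obtain ⟨d', htr', heq'⟩ := (hQ₂ F).1
    have hge : Q₃ (T F) ≤ Q₂ F := by
      rw [heq', hemb F d' htr']
      have := hmin F (d' 0 - xL F) (d' 1 - yL F)
      have harr : T F + (d' 0 - xL F) • M0 + (d' 1 - yL F) • M1
          = A F + d' 0 • M0 + d' 1 • M1 := by
        rw [hTapp]
        rw [sub_smul, sub_smul]
        abel
      rw [harr] at this
      exact this
    linarith
  refine ⟨⟨B₃.compl₁₂ T T, ?_, ?_⟩, ?_, ?_, ?_⟩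
  · intro F₁ F₂
    simp only [LinearMap.compl₁₂_apply]
    exact hB₃symm _ _
  · intro F
    simp only [LinearMap.compl₁₂_apply]
    rw [hQT, hQ₃]
  · intro F
    rw [hQT]; exact hpsd _
  · -- positive definiteness on symmetric matrices
    intro F hFsymm hFne
    rw [hQT]
    apply hpd
    · -- T F is symmetric
      unfold Matrix.IsSymm
      rw [hTapp, Matrix.transpose_add, Matrix.transpose_add, Matrix.transpose_smul,
        Matrix.transpose_smul, A_transpose, hFsymm.eq, M0_isSymm.eq, M1_isSymm.eq]
    · -- T F ≠ 0 since its upper-left block is F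
      intro h
      apply hFne
      ext i j
      have := congrFun (congrFun h (Fin.castLE (by norm_num) i))
        (Fin.castLE (by norm_num) j)
      rw [hTapp] at this
      simp only [Matrix.add_apply, Matrix.smul_apply, A_block, M0_block, M1_block,
        smul_eq_mul, mul_zero, add_zero, Matrix.zero_apply] at this
      exact this
  · -- depends only on the symmetric part
    intro F
    have hsets : {q : ℝ | ∃ d : Fin 3 → ℝ, (emb F d).trace = 0 ∧ q = Q₃ (emb F d)}
        = {q : ℝ | ∃ d : Fin 3 → ℝ, (emb ((1/2 : ℝ) • (F + Fᵀ)) d).trace = 0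
            ∧ q = Q₃ (emb ((1/2 : ℝ) • (F + Fᵀ)) d)} := by
      have hkey : ∀ d : Fin 3 → ℝ,
          (1/2 : ℝ) • (emb F d + (emb F d)ᵀ) = emb ((1/2 : ℝ) • (F + Fᵀ)) d := by
        intro d
        ext i j
        simp only [Matrix.smul_apply, Matrix.add_apply, Matrix.transpose_apply,
          emb_apply, smul_eq_mul]
        fin_cases i <;> fin_cases j <;>
          simp [Matrix.smul_apply, Matrix.add_apply, Matrix.transpose_apply] <;> ring
      have htreq : ∀ d : Fin 3 → ℝ,
          (emb ((1/2 : ℝ) • (F + Fᵀ)) d).trace = (emb F d).trace := by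
        intro d
        rw [trace_emb, trace_emb]
        simp [Matrix.trace_smul, Matrix.trace_add, Matrix.trace_transpose, smul_eq_mul]
        ring
      have hQeq : ∀ d : Fin 3 → ℝ, Q₃ (emb F d) = Q₃ (emb ((1/2 : ℝ) • (F + Fᵀ)) d) := by
        intro d
        rw [hsym (emb F d), hkey d]
      ext q
      constructor
      · rintro ⟨d, htr, rfl⟩
        exact ⟨d, by rw [htreq]; exact htr, hQeq d⟩
      · rintro ⟨d, htr, rfl⟩
        exact ⟨d, by rw [← htreq]; exact htr, (hQeq d).symm⟩
    have h1 := hQ₂ F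
    have h2 := hQ₂ ((1/2 : ℝ) • (F + Fᵀ))
    rw [hsets] at h1
    exact le_antisymm (h1.2 h2.1) (h2.2 h1.1)
end
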